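/- arXiv:1701.06124 — 13 statements merged into one kernel-verified Lean document; each statement's English description precedes it below -/
import Mathlib

section
/- Let A be a commutative unital R-algebra, D₁,…,Dₙ R-derivations of A, P a homogeneous polynomial of degree d in n commuting variables with coefficients in A, and u ∈ A. Then applying the operator ad_{-u} d times to P(D₁,…,Dₙ) yields the multiplication operator by d!·P(D₁u,…,Dₙu), i.e., (ad_{-u})^d(P(D)) = d!·ℓ_{P(∇u)}. -/
/-!
`ad_{-u}` is a derivation of the ring `End_R(A)` which kills every multiplication operator and
sends a derivation `D` to the multiplication operator `ℓ_{D u}`; in particular it squares to zero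
on each `Dᵢ`. By the Leibniz rule, `ad_{-u}^k` of a product of `k` such factors is `k!` times the
product of their images, and it vanishes on a product of fewer than `k` of them. Applied to each
monomial `ℓ_{c_m} D^m` of `P(D)`, of degree `|m| = d`, this gives `d! ℓ_{c_m (∇u)^m}`.
-/

open Finset in
/-- The differential operator `P(D)` obtained from `P ∈ A[ξ₁,…,ξₙ]` by substituting the
derivations `Dᵢ` for `ξᵢ`, with the coefficients written on the left. -/
noncomputable def mvDiffOp {R A : Type*} [CommRing R] [CommRing A] [Algebra R A]
    {n : ℕ} (D : Fin n → Derivation R A A) (P : MvPolynomial (Fin n) A) :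
    Module.End R A :=
  ∑ m ∈ P.support,
    LinearMap.mulLeft R (P.coeff m) *
      ((List.finRange n).map fun i => (D i).toLinearMap ^ m i).prod

open scoped Nat

section IterateLeibniz

variable {S : Type*} [Ring S] {δ : AddMonoid.End S}

theorem iterate_succ_mul_of_map_map_eq_zero (hδ : ∀ x y, δ (x * y) = x * δ y + δ x * y)
    {x : S} (hx : δ (δ x) = 0) (k : ℕ) (y : S) :
    δ^[k + 1] (x * y) = x * δ^[k + 1] y + (k + 1) • (δ x * δ^[k] y) := by
  induction k with
  | zero => simpa using hδ x y
  | succ k ih =>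
    rw [Function.iterate_succ_apply', ih, map_add, hδ, map_nsmul, hδ, hx, zero_mul, add_zero,
      ← Function.iterate_succ_apply' δ (k + 1), ← Function.iterate_succ_apply' δ k,
      succ_nsmul _ (k + 1)]
    abel

theorem iterate_mul_of_map_eq_zero (hδ : ∀ x y, δ (x * y) = x * δ y + δ x * y)
    {x : S} (hx : δ x = 0) (k : ℕ) (y : S) : δ^[k] (x * y) = x * δ^[k] y := by
  cases k with
  | zero => rfl
  | succ k =>
    rw [iterate_succ_mul_of_map_map_eq_zero hδ (by rw [hx, map_zero]), hx, zero_mul, smul_zero,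
      add_zero]

theorem iterate_list_prod_eq_zero_of_length_lt (hδ : ∀ x y, δ (x * y) = x * δ y + δ x * y)
    {L : List S} (hL : ∀ x ∈ L, δ (δ x) = 0) {k : ℕ} (hk : L.length < k) :
    δ^[k] L.prod = 0 := by
  induction L generalizing k with
  | nil =>
    obtain ⟨k, rfl⟩ := Nat.exists_eq_add_one.mpr (Nat.zero_lt_of_lt hk)
    have h1 : δ 1 = 0 := by simpa using hδ 1 1
    rw [List.prod_nil, Function.iterate_succ_apply, h1, iterate_map_zero]
  | cons x L ih =>
    obtain ⟨k, rfl⟩ := Nat.exists_eq_add_one.mpr (Nat.zero_lt_of_lt hk)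
    simp only [List.length_cons, add_lt_add_iff_right] at hk
    have hL' : ∀ y ∈ L, δ (δ y) = 0 := fun y hy => hL y (List.mem_cons_of_mem x hy)
    rw [List.prod_cons, iterate_succ_mul_of_map_map_eq_zero hδ (hL x List.mem_cons_self),
      ih hL' (by omega), ih hL' hk, mul_zero, mul_zero, smul_zero, add_zero]

theorem iterate_length_list_prod (hδ : ∀ x y, δ (x * y) = x * δ y + δ x * y)
    {L : List S} (hL : ∀ x ∈ L, δ (δ x) = 0) :
    δ^[L.length] L.prod = L.length ! • (L.map δ).prod := by
  induction L with
  | nil => simp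
  | cons x L ih =>
    have hL' : ∀ y ∈ L, δ (δ y) = 0 := fun y hy => hL y (List.mem_cons_of_mem x hy)
    rw [List.prod_cons, List.length_cons, iterate_succ_mul_of_map_map_eq_zero hδ
      (hL x List.mem_cons_self), iterate_list_prod_eq_zero_of_length_lt hδ hL' (by omega),
      mul_zero, zero_add, ih hL', List.map_cons, List.prod_cons, mul_smul_comm, smul_smul,
      Nat.factorial_succ]

theorem iterate_sum_list_prod_pow (hδ : ∀ x y, δ (x * y) = x * δ y + δ x * y)
    {ι : Type*} {x : ι → S} (hx : ∀ i, δ (δ (x i)) = 0) (e : ι → ℕ) (l : List ι) :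
    δ^[(l.map e).sum] (l.map fun i => x i ^ e i).prod =
      (l.map e).sum ! • (l.map fun i => δ (x i) ^ e i).prod := by
  set L := l.flatMap fun i => List.replicate (e i) (x i)
  have hlen : L.length = (l.map e).sum := by simp [L, List.length_flatMap]
  have hprod (f : S → S) : (L.map f).prod = (l.map fun i => f (x i) ^ e i).prod := by
    simp [L, List.flatMap_def, List.prod_flatten, Function.comp_def]
  have hL : ∀ y ∈ L, δ (δ y) = 0 := by
    simp only [L, List.mem_flatMap, List.mem_replicate]
    rintro y ⟨i, -, -, rfl⟩
    exact hx i
  rw [← hlen, ← hprod δ, ← iterate_length_list_prod hδ hL, ← List.map_id L, hprod id]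
  rfl

end IterateLeibniz

section AdNeg

variable {S : Type*} [Ring S]

/-- The operator `ad_{-c} = [-c, ·]`. -/
def adNeg (c : S) : AddMonoid.End S := AddMonoidHom.mulRight c - AddMonoidHom.mulLeft c

theorem adNeg_apply (c x : S) : adNeg c x = x * c - c * x := rfl

theorem adNeg_mul (c x y : S) : adNeg c (x * y) = x * adNeg c y + adNeg c x * y := by
  simp only [adNeg_apply, mul_sub, sub_mul, mul_assoc]
  abel

theorem adNeg_eq_zero_of_commute {c x : S} (h : Commute x c) : adNeg c x = 0 :=
  sub_eq_zero.mpr h.eq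

end AdNeg

section MulLeft

variable {R A : Type*} [CommRing R] [CommRing A] [Algebra R A]

theorem adNeg_mulLeft_mulLeft (u a : A) :
    adNeg (LinearMap.mulLeft R u) (LinearMap.mulLeft R a) = 0 :=
  adNeg_eq_zero_of_commute ((Commute.all a u).map (Algebra.lmul R A))

theorem adNeg_mulLeft_derivation (u : A) (D : Derivation R A A) :
    adNeg (LinearMap.mulLeft R u) D.toLinearMap = LinearMap.mulLeft R (D u) := by
  ext x
  simp only [adNeg_apply, LinearMap.sub_apply, Module.End.mul_apply, LinearMap.mulLeft_apply,
    Derivation.coeFn_coe, Derivation.leibniz, smul_eq_mul]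
  ring

theorem list_prod_map_mulLeft_pow {ι : Type*} (l : List ι) (a : ι → A) (e : ι → ℕ) :
    (l.map fun i => LinearMap.mulLeft R (a i) ^ e i).prod =
      LinearMap.mulLeft R (l.map fun i => a i ^ e i).prod := by
  simp only [LinearMap.pow_mulLeft]
  change _ = Algebra.lmul R A _
  rw [map_list_prod, List.map_map]
  rfl

end MulLeft

/-- Let `A` be a commutative unital `R`-algebra, `D₁,…,Dₙ` `R`-derivations of `A`, `P` a
homogeneous polynomial of degree `d` in `n` commuting variables with coefficients in `A`,
and `u ∈ A`. Then `(ad_{-u})^d (P(D)) = d! · ℓ_{P(∇u)}`. -/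
theorem stmt2 {R A : Type*} [CommRing R] [CommRing A] [Algebra R A]
    (n d : ℕ) (D : Fin n → Derivation R A A)
    (P : MvPolynomial (Fin n) A) (hP : P.IsHomogeneous d) (u : A) :
    (fun Φ : Module.End R A =>
        Φ * LinearMap.mulLeft R u - LinearMap.mulLeft R u * Φ)^[d] (mvDiffOp D P) =
      (Nat.factorial d) • LinearMap.mulLeft R (MvPolynomial.eval (fun i => D i u) P) := by
  set δ := adNeg (LinearMap.mulLeft R u)
  change (⇑δ)^[d] _ = _
  rw [mvDiffOp, ← AddMonoid.End.coe_pow, map_sum, MvPolynomial.eval_eq']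
  change _ = d ! • Algebra.lmul R A _
  rw [map_sum, Finset.smul_sum]
  refine Finset.sum_congr rfl fun m hm => ?_
  have hdeg : ((List.finRange n).map m).sum = d := by
    rw [← Fin.sum_univ_def, ← Finsupp.degree_eq_sum, Finsupp.degree_eq_weight_one]
    exact hP (MvPolynomial.mem_support_iff.mp hm)
  have hδD (i : Fin n) : δ (δ (D i).toLinearMap) = 0 := by
    rw [adNeg_mulLeft_derivation, adNeg_mulLeft_mulLeft]
  rw [AddMonoid.End.coe_pow, iterate_mul_of_map_eq_zero (adNeg_mul _) (adNeg_mulLeft_mulLeft _ _),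
    ← hdeg, iterate_sum_list_prod_pow (adNeg_mul _) hδD]
  simp only [adNeg_mulLeft_derivation, list_prod_map_mulLeft_pow, Fin.prod_univ_def]
  rw [map_mul, mul_smul_comm]
  rfl
end

section
/- Let A be an algebra over a commutative ring R, D an R-derivation of A, and λ, μ ∈ R. Then for all m ≥ 1 and a, b ∈ A: (D - (λ+μ)·id)^m(ab) = Σ_{i=0}^m C(m,i)·((D - λ·id)^i a)·((D - μ·id)^{m-i} b). -/
/-!
The twisted Leibniz rule `E (x * y) = F x * y + x * G y` says that multiplication
`A ⊗[R] A → A` intertwines `F ⊗ 1 + 1 ⊗ G` with `E`. The two summands commute, so the binomial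
theorem expands `(F ⊗ 1 + 1 ⊗ G) ^ n`, and multiplying back gives the formula for `E ^ n`.
For `E = D - (λ + μ)`, `F = D - λ`, `G = D - μ` the twisted rule is the Leibniz rule for `D`.
-/

open TensorProduct

namespace LinearMap

theorem commute_rTensor_lTensor {R M N : Type*} [CommSemiring R] [AddCommMonoid M]
    [AddCommMonoid N] [Module R M] [Module R N] (f : Module.End R M) (g : Module.End R N) :
    Commute (f.rTensor N) (g.lTensor M) := by
  rw [commute_iff_eq, Module.End.mul_eq_comp, Module.End.mul_eq_comp, rTensor_comp_lTensor,
    lTensor_comp_rTensor]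

theorem pow_apply_mul_of_map_mul {R A : Type*} [CommSemiring R] [Semiring A] [Algebra R A]
    {E F G : Module.End R A} (h : ∀ x y, E (x * y) = F x * y + x * G y) (n : ℕ) (x y : A) :
    (E ^ n) (x * y) = ∑ i ∈ Finset.range (n + 1), n.choose i • ((F ^ i) x * (G ^ (n - i)) y) := by
  have hmul : E ∘ₗ mul' R A = mul' R A ∘ₗ (F.rTensor A + G.lTensor A) :=
    TensorProduct.ext' fun x y => by simp [h]
  have hpow := congr($(Module.End.commute_pow_left_of_commute hmul n) (x ⊗ₜ y))
  simpa [(commute_rTensor_lTensor F G).add_pow, ← Nat.cast_comm, ← nsmul_eq_mul, rTensor_pow,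
    lTensor_pow] using hpow

theorem sub_add_smul_id_apply_mul {R A : Type*} [CommRing R] [Ring A] [Algebra R A]
    {D : Module.End R A} (hD : ∀ x y : A, D (x * y) = D x * y + x * D y) (l m : R) (x y : A) :
    (D - (l + m) • (LinearMap.id : Module.End R A)) (x * y) =
      (D - l • (LinearMap.id : Module.End R A)) x * y +
        x * (D - m • (LinearMap.id : Module.End R A)) y := by
  simp only [sub_apply, smul_apply, add_apply, id_apply, hD, add_smul, smul_mul_assoc,
    mul_smul_comm, sub_mul, mul_sub]
  abel

end LinearMap

theorem stmt7_general {R A : Type*} [CommRing R] [Ring A] [Algebra R A]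
    (D : A →ₗ[R] A) (hD : ∀ x y : A, D (x * y) = D x * y + x * D y)
    (l m' : R) (m : ℕ) (a b : A) :
    ((D - (l + m') • (LinearMap.id : A →ₗ[R] A)) ^ m) (a * b) =
      ∑ i ∈ Finset.range (m + 1), m.choose i •
        (((D - l • (LinearMap.id : A →ₗ[R] A)) ^ i) a *
          ((D - m' • (LinearMap.id : A →ₗ[R] A)) ^ (m - i)) b) :=
  LinearMap.pow_apply_mul_of_map_mul (LinearMap.sub_add_smul_id_apply_mul hD l m') m a b

/-- For an `R`-algebra `A` (not necessarily commutative), an `R`-derivation `D` and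
`λ μ ∈ R`, for all `m ≥ 1` and `a b ∈ A`:
`(D - (λ+μ)·id)^m (ab) = ∑_{i=0}^m C(m,i) ((D - λ·id)^i a)((D - μ·id)^{m-i} b)`. -/
theorem stmt7 {R A : Type*} [CommRing R] [Ring A] [Algebra R A]
    (D : A →ₗ[R] A) (hD : ∀ x y : A, D (x * y) = D x * y + x * D y)
    (l m' : R) (m : ℕ) (hm : 1 ≤ m) (a b : A) :
    ((D - (l + m') • (LinearMap.id : A →ₗ[R] A)) ^ m) (a * b) =
      ∑ i ∈ Finset.range (m + 1), m.choose i •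
        (((D - l • (LinearMap.id : A →ₗ[R] A)) ^ i) a *
          ((D - m' • (LinearMap.id : A →ₗ[R] A)) ^ (m - i)) b) :=
  stmt7_general D hD l m' m a b
end

section
/- Let A be an algebra over a commutative ring R, D an R-derivation of A, and for λ ∈ R let A_λ = ∪_{i≥1} Ker((D - λ·id)^i) be the generalized eigenspace of D for λ. Then A_λ · A_μ ⊆ A_{λ+μ} for all λ, μ ∈ R. -/
/-!
Write `P = D - λ`, `Q = D - μ`, `E = D - (λ + μ)`. The Leibniz rule for `D` becomes
`E (x * y) = P x * y + x * Q y`, i.e. multiplication `A ⊗ A → A` intertwines the commuting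
operators `P ⊗ 1 + 1 ⊗ Q` and `E`. Hence `E ^ n (a * b)` is the image of
`(P ⊗ 1 + 1 ⊗ Q) ^ n (a ⊗ b)`, and if `P ^ i a = 0` and `Q ^ j b = 0`, every term of the
binomial expansion of the latter vanishes for `n = i + j - 1`.
-/

open TensorProduct

namespace Module.End

variable {R M : Type*} [CommSemiring R] [AddCommMonoid M] [Module R M]

theorem add_pow_apply_eq_zero_of_pow_apply_eq_zero {f g : End R M} (hfg : Commute f g)
    {m : M} {i j : ℕ} (hf : (f ^ i) m = 0) (hg : (g ^ j) m = 0) :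
    ((f + g) ^ (i + j - 1)) m = 0 := by
  rw [hfg.add_pow']
  simp only [LinearMap.coe_sum, Finset.sum_apply, LinearMap.smul_apply]
  refine Finset.sum_eq_zero fun ⟨k, l⟩ hkl => ?_
  rcases Nat.le_or_le_of_add_eq_add_pred (Finset.HasAntidiagonal.mem_antidiagonal.mp hkl)
    with hk | hl
  · rw [(hfg.pow_pow k l).eq, mul_apply, pow_map_zero_of_le hk hf, map_zero, smul_zero]
  · rw [mul_apply, pow_map_zero_of_le hl hg, map_zero, smul_zero]

end Module.End

section TwistedLeibniz

variable {R A : Type*} [CommSemiring R] [NonUnitalNonAssocSemiring A] [Module R A]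
  [SMulCommClass R A A] [IsScalarTower R A A] {P Q E : Module.End R A}

theorem LinearMap.mul'_comp_rTensor_add_lTensor
    (hE : ∀ x y : A, E (x * y) = P x * y + x * Q y) :
    mul' R A ∘ₗ (P.rTensor A + Q.lTensor A) = E ∘ₗ mul' R A := by
  ext x y
  simp [hE]

theorem pow_apply_mul_eq_zero_of_twisted_leibniz (hE : ∀ x y : A, E (x * y) = P x * y + x * Q y)
    {a b : A} {i j : ℕ} (ha : (P ^ i) a = 0) (hb : (Q ^ j) b = 0) :
    (E ^ (i + j - 1)) (a * b) = 0 := by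
  have hPQ : Commute (P.rTensor A) (Q.lTensor A) := by
    simp only [Commute, SemiconjBy, Module.End.mul_eq_comp, LinearMap.rTensor_comp_lTensor,
      LinearMap.lTensor_comp_rTensor]
  have hP : (P.rTensor A ^ i) (a ⊗ₜ b) = 0 := by
    rw [LinearMap.rTensor_pow, LinearMap.rTensor_tmul, ha, zero_tmul]
  have hQ : (Q.lTensor A ^ j) (a ⊗ₜ b) = 0 := by
    rw [LinearMap.lTensor_pow, LinearMap.lTensor_tmul, hb, tmul_zero]
  calc (E ^ (i + j - 1)) (a * b)
      = LinearMap.mul' R A (((P.rTensor A + Q.lTensor A) ^ (i + j - 1)) (a ⊗ₜ b)) := by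
        rw [← LinearMap.comp_apply, ← Module.End.commute_pow_left_of_commute
          (LinearMap.mul'_comp_rTensor_add_lTensor hE).symm, LinearMap.comp_apply,
          LinearMap.mul'_apply]
    _ = 0 := by
        rw [Module.End.add_pow_apply_eq_zero_of_pow_apply_eq_zero hPQ hP hQ, map_zero]

end TwistedLeibniz

theorem sub_add_smul_one_apply_mul {R A : Type*} [CommRing R] [NonUnitalNonAssocRing A]
    [Module R A] [SMulCommClass R A A] [IsScalarTower R A A] {D : Module.End R A}
    (hD : ∀ x y : A, D (x * y) = D x * y + x * D y) (l m : R) (x y : A) :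
    (D - (l + m) • 1) (x * y) = (D - l • 1) x * y + x * (D - m • 1) y := by
  simp only [LinearMap.sub_apply, LinearMap.add_apply, LinearMap.smul_apply, Module.End.one_apply,
    hD, add_smul, sub_mul, mul_sub, smul_mul_assoc, mul_smul_comm]
  abel

/-- For an `R`-algebra `A` with an `R`-derivation `D`, the generalized eigenspaces
`A_λ = ∪_{i ≥ 1} Ker (D - λ·id)^i` satisfy `A_λ · A_μ ⊆ A_{λ+μ}`. -/
theorem stmt8 {R A : Type*} [CommRing R] [Ring A] [Algebra R A]
    (D : A →ₗ[R] A) (hD : ∀ x y : A, D (x * y) = D x * y + x * D y)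
    (l m' : R) (a b : A)
    (ha : ∃ i : ℕ, 1 ≤ i ∧ ((D - l • (LinearMap.id : A →ₗ[R] A)) ^ i) a = 0)
    (hb : ∃ i : ℕ, 1 ≤ i ∧ ((D - m' • (LinearMap.id : A →ₗ[R] A)) ^ i) b = 0) :
    ∃ i : ℕ, 1 ≤ i ∧
      ((D - (l + m') • (LinearMap.id : A →ₗ[R] A)) ^ i) (a * b) = 0 := by
  obtain ⟨i, hi, hia⟩ := ha
  obtain ⟨j, hj, hjb⟩ := hb
  exact ⟨i + j - 1, by omega,
    pow_apply_mul_eq_zero_of_twisted_leibniz (sub_add_smul_one_apply_mul hD l m') hia hjb⟩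
end

section
/- Let R be a commutative ring whose additive group is torsion-free. Then every nonempty finite subset A of R^n has at least one extremal element, i.e., an element λ ∈ A such that for no m ≥ 1 can mλ be written as a linear combination of elements of A \ {λ} with positive integer coefficients summing to at most m. -/
/-!
A torsion-free abelian group `G` embeds into `ℚ ⊗[ℤ] G`, hence, after choosing a well-ordered
`ℚ`-basis, into a lexicographically ordered group. In an ordered group an element `λ ≥ 0` of `A`
that is strictly larger than every other element of `A` is extremal, since
`∑ cᵢ μᵢ < (∑ cᵢ) λ ≤ m λ`. The maximum of `A` is such an element when it is nonnegative;
otherwise the same argument applied to the negated embedding picks the minimum.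
-/

open Finset TensorProduct

universe u in
theorem IsAddTorsionFree.exists_injective_addMonoidHom_lex (G : Type u) [AddCommGroup G]
    [IsAddTorsionFree G] :
    ∃ (κ : Type u) (_ : LinearOrder κ) (f : G →+ Lex (κ →₀ ℚ)), Function.Injective f := by
  let ι : G →ₗ[ℤ] ℚ ⊗[ℤ] G :=
    (Algebra.linearMap ℤ ℚ).rTensor G ∘ₗ (TensorProduct.lid ℤ G).symm.toLinearMap
  have hι : Function.Injective ι :=
    (Module.Flat.rTensor_preserves_injective_linearMap _ (algebraMap ℤ ℚ).injective_int).comp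
      (TensorProduct.lid ℤ G).symm.injective
  let κ := Module.Basis.ofVectorSpaceIndex ℚ (ℚ ⊗[ℤ] G)
  let b : Module.Basis κ ℚ (ℚ ⊗[ℤ] G) := Module.Basis.ofVectorSpace ℚ _
  let e := b.repr.toAddEquiv.trans (toLexAddEquiv (κ →₀ ℚ))
  exact ⟨κ, IsWellOrder.linearOrder WellOrderingRel, e.toAddMonoidHom.comp ι.toAddMonoidHom,
    e.injective.comp hι⟩

section Extremal

variable {G H : Type*} [AddCommMonoid G] [DecidableEq G]

def IsExtremal (A : Finset G) (l : G) : Prop :=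
  ∀ m : ℕ, 1 ≤ m → ¬ ∃ c : G → ℕ,
    1 ≤ ∑ μ ∈ A.erase l, c μ ∧ ∑ μ ∈ A.erase l, c μ ≤ m ∧ m • l = ∑ μ ∈ A.erase l, c μ • μ

theorem isExtremal_of_map_lt [AddCommMonoid H] [PartialOrder H] [IsOrderedCancelAddMonoid H]
    (f : G →+ H) {A : Finset G} {l : G} (hl : 0 ≤ f l) (hA : ∀ μ ∈ A.erase l, f μ < f l) :
    IsExtremal A l := by
  rintro m - ⟨c, hc, hcm, heq⟩
  obtain ⟨ν, hν, hcν⟩ := exists_ne_zero_of_sum_ne_zero (Nat.one_le_iff_ne_zero.mp hc)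
  have hlt : ∑ μ ∈ A.erase l, c μ • f μ < ∑ μ ∈ A.erase l, c μ • f l :=
    sum_lt_sum (fun μ hμ => nsmul_le_nsmul_right (hA μ hμ).le _)
      ⟨ν, hν, nsmul_lt_nsmul_right hcν (hA ν hν)⟩
  refine hlt.not_ge ?_
  calc ∑ μ ∈ A.erase l, c μ • f l = (∑ μ ∈ A.erase l, c μ) • f l := sum_smul.symm
    _ ≤ m • f l := nsmul_le_nsmul_left hl hcm
    _ = ∑ μ ∈ A.erase l, c μ • f μ := by rw [← map_nsmul, heq, map_sum]; simp only [map_nsmul]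

theorem exists_isExtremal_of_injOn_of_nonneg [AddCommMonoid H] [LinearOrder H]
    [IsOrderedCancelAddMonoid H] (f : G →+ H) {A : Finset G} (hf : Set.InjOn f A)
    {a : G} (ha : a ∈ A) (hfa : 0 ≤ f a) : ∃ l ∈ A, IsExtremal A l := by
  obtain ⟨l, hl, hmax⟩ := exists_max_image A f ⟨a, ha⟩
  refine ⟨l, hl, isExtremal_of_map_lt f (hfa.trans (hmax a ha)) fun μ hμ => ?_⟩
  exact (hmax μ (mem_of_mem_erase hμ)).lt_of_ne
    fun h => ne_of_mem_erase hμ (hf (mem_of_mem_erase hμ) hl h)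

theorem exists_isExtremal_of_injOn [AddCommGroup H] [LinearOrder H] [IsOrderedAddMonoid H]
    (f : G →+ H) {A : Finset G} (hf : Set.InjOn f A) (hA : A.Nonempty) :
    ∃ l ∈ A, IsExtremal A l := by
  by_cases hpos : ∃ a ∈ A, 0 ≤ f a
  · obtain ⟨a, ha, hfa⟩ := hpos
    exact exists_isExtremal_of_injOn_of_nonneg f hf ha hfa
  · push Not at hpos
    obtain ⟨a, ha⟩ := hA
    refine exists_isExtremal_of_injOn_of_nonneg (-f) (fun x hx y hy h => hf hx hy ?_) ha ?_
    · simpa using h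
    · simpa using (hpos a ha).le

end Extremal

/-- Let `R` be a commutative ring whose additive group is torsion-free. Then every nonempty
finite subset `A` of `R^n` has an extremal element: some `λ ∈ A` such that for no `m ≥ 1`
can `m λ` be written as a linear combination of elements of `A \ {λ}` with positive integer
coefficients (equivalently, nonnegative coefficients with sum at least 1) summing to at most
`m`. -/
theorem stmt9 {R : Type*} [CommRing R] [DecidableEq R]
    (htf : ∀ (k : ℕ) (r : R), k ≠ 0 → k • r = 0 → r = 0)
    (n : ℕ) (A : Finset (Fin n → R)) (hA : A.Nonempty) :
    ∃ l ∈ A, ∀ m : ℕ, 1 ≤ m →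
      ¬ ∃ c : (Fin n → R) → ℕ,
        1 ≤ ∑ μ ∈ A.erase l, c μ ∧
        (∑ μ ∈ A.erase l, c μ) ≤ m ∧
        m • l = ∑ μ ∈ A.erase l, c μ • μ := by
  have : IsAddTorsionFree R :=
    ⟨fun k hk a b h => sub_eq_zero.mp (htf k _ hk (by rw [nsmul_sub, sub_eq_zero]; exact h))⟩
  obtain ⟨_, _, f, hf⟩ := IsAddTorsionFree.exists_injective_addMonoidHom_lex (Fin n → R)
  exact exists_isExtremal_of_injOn f hf.injOn hA
end

section
/- Let R be a commutative ring and A a commutative R-algebra whose additive group is torsion-free. If D is an R-derivation of A that is locally integral over R (for each a ∈ A there is a D-invariant R-subalgebra A₁ containing a and a monic polynomial p(t) ∈ R[t] with p(D) vanishing on A₁), then the image of D is contained in the nilradical of A. -/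
/-!
Freeze a copy of `a` as a constant: in `A[X]`, with `D` acting on coefficients, all coefficients
of `u = C a - X` lie in `A₁`, so `p(D)` kills `u ^ n` for `n = deg p`. Evaluation at `X = a`
kills `u`, so by the Leibniz rule it sends `D^k (u ^ n)` to `0` for `k < n` and to `n! (D a) ^ n`
for `k = n`. As `p` is monic, evaluating `p(D) (u ^ n) = 0` gives `n! (D a) ^ n = 0`, and
torsion-freeness gives `(D a) ^ n = 0`.
-/

open Polynomial Finset

namespace Derivation

variable {R B : Type*} [CommRing R] [CommRing B] [Algebra R B] (δ : Derivation R B B)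

theorem iterate_apply_mul (k : ℕ) (x y : B) :
    δ^[k] (x * y) = ∑ ij ∈ antidiagonal k, k.choose ij.1 • (δ^[ij.1] x * δ^[ij.2] y) := by
  induction k with
  | zero => simp
  | succ k ih =>
    rw [sum_antidiagonal_choose_succ_nsmul (M := B) (fun i j => δ^[i] x * δ^[j] y) k]
    simp only [Function.iterate_succ_apply', ih, map_sum, map_nsmul, leibniz, smul_eq_mul,
      smul_add, sum_add_distrib]
    congr 1
    refine sum_congr rfl fun ⟨i, j⟩ hij ↦ ?_
    rw [k.choose_symm_of_eq_add (mem_antidiagonal.1 hij).symm]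
    ring

variable {S F : Type*} [CommRing S] [FunLike F B S] (ε : F) {u : B}

theorem map_iterate_pow_of_lt [RingHomClass F B S] (hu : ε u = 0) {m k : ℕ} (hk : k < m) :
    ε (δ^[k] (u ^ m)) = 0 := by
  induction m generalizing k with
  | zero => omega
  | succ m ih =>
    rw [pow_succ', iterate_apply_mul, map_sum]
    refine sum_eq_zero fun ⟨i, j⟩ hij ↦ ?_
    rw [HasAntidiagonal.mem_antidiagonal] at hij
    rcases i with _ | i
    · simp [hu]
    · simp [ih (by omega : j < m)]

theorem map_iterate_pow_self [RingHomClass F B S] (hu : ε u = 0) (m : ℕ) :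
    ε (δ^[m] (u ^ m)) = m.factorial • ε (δ u) ^ m := by
  induction m with
  | zero => simp
  | succ m ih =>
    rw [pow_succ', iterate_apply_mul, map_sum, sum_eq_single (1, m)]
    · simp only [Function.iterate_one, Nat.choose_one_right, map_nsmul, map_mul, ih]
      rw [Nat.factorial_succ, pow_succ', mul_smul, mul_smul_comm]
    · rintro ⟨i, j⟩ hij hne
      rw [HasAntidiagonal.mem_antidiagonal] at hij
      rcases i with _ | _ | i
      · simp [hu]
      · exact absurd (by congr; omega) hne
      · simp [map_iterate_pow_of_lt δ ε hu (by omega : j < m)]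
    · exact fun h ↦ absurd (HasAntidiagonal.mem_antidiagonal.2 (by omega)) h

theorem map_aeval_pow_natDegree [Algebra R S] [AlgHomClass F R B S] (hu : ε u = 0) {p : R[X]}
    (hp : p.Monic) :
    ε (aeval δ.toLinearMap p (u ^ p.natDegree)) =
      p.natDegree.factorial • ε (δ u) ^ p.natDegree := by
  rw [aeval_eq_sum_range, LinearMap.sum_apply, map_sum, sum_range_succ,
    sum_eq_zero fun i hi ↦ ?_, zero_add]
  · rw [LinearMap.smul_apply, _root_.map_smul, hp.coeff_natDegree, one_smul,
      Module.End.pow_apply, coeFn_coe]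
    exact map_iterate_pow_self δ ε hu _
  · rw [LinearMap.smul_apply, _root_.map_smul, Module.End.pow_apply, coeFn_coe,
      map_iterate_pow_of_lt δ ε hu (mem_range.1 hi), smul_zero]

variable {A : Type*} [CommRing A] [Algebra R A] (D : Derivation R A A)

noncomputable def mapCoeffsSelf : Derivation R A[X] A[X] :=
  PolynomialModule.equivPolynomialSelf.compDer D.mapCoeffs

@[simp]
theorem coeff_mapCoeffsSelf (f : A[X]) (i : ℕ) : (D.mapCoeffsSelf f).coeff i = D (f.coeff i) :=
  rfl

theorem coeff_iterate_mapCoeffsSelf (k : ℕ) (f : A[X]) (i : ℕ) :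
    (D.mapCoeffsSelf^[k] f).coeff i = D^[k] (f.coeff i) := by
  induction k generalizing f with
  | zero => rfl
  | succ k ih => simp [ih]

@[simp]
theorem mapCoeffsSelf_C (a : A) : D.mapCoeffsSelf (C a) = C (D a) := by
  ext i
  simp [coeff_C, apply_ite D]

@[simp]
theorem mapCoeffsSelf_X : D.mapCoeffsSelf (X : A[X]) = 0 := by
  ext i
  simp [coeff_X, apply_ite D]

theorem coeff_aeval_mapCoeffsSelf (p : R[X]) (f : A[X]) (i : ℕ) :
    (aeval D.mapCoeffsSelf.toLinearMap p f).coeff i = aeval D.toLinearMap p (f.coeff i) := by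
  simp only [aeval_eq_sum_range, LinearMap.sum_apply, finsetSum_coeff, LinearMap.smul_apply,
    coeff_smul, Module.End.pow_apply, coeFn_coe, coeff_iterate_mapCoeffsSelf]

end Derivation

/-- Let `R` be a commutative ring and `A` a commutative `R`-algebra whose additive group is
torsion-free. If `D` is an `R`-derivation of `A` that is locally integral over `R` (for each
`a ∈ A` there is a `D`-invariant `R`-subalgebra `A₁` containing `a` and a monic polynomial
`p ∈ R[t]` with `p(D)` vanishing on `A₁`), then `Im D ⊆ nil(A)`. -/
theorem stmt10 {R A : Type*} [CommRing R] [CommRing A] [Algebra R A]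
    (htf : ∀ (k : ℕ) (a : A), k ≠ 0 → k • a = 0 → a = 0)
    (D : Derivation R A A)
    (hloc : ∀ a : A, ∃ (A₁ : Subalgebra R A) (p : Polynomial R),
      a ∈ A₁ ∧ (∀ x ∈ A₁, D x ∈ A₁) ∧ p.Monic ∧
        ∀ x ∈ A₁, (Polynomial.aeval (D.toLinearMap : Module.End R A) p) x = 0) :
    ∀ a : A, IsNilpotent (D a) := by
  intro a
  obtain ⟨A₁, p, ha, -, hp, hpD⟩ := hloc a
  let ε : A[X] →ₐ[R] A := (aeval a).restrictScalars R
  have hu : ε (C a - X) = 0 := by simp [ε]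
  have hδu : ε (D.mapCoeffsSelf (C a - X)) = D a := by simp [ε]
  have hlift : (C a - X) ^ p.natDegree =
      ((C ⟨a, ha⟩ - X) ^ p.natDegree : A₁[X]).map (algebraMap A₁ A) := by simp
  have hkill : aeval D.mapCoeffsSelf.toLinearMap p ((C a - X) ^ p.natDegree) = 0 := by
    ext i
    rw [D.coeff_aeval_mapCoeffsSelf, hlift, coeff_map, coeff_zero]
    exact hpD _ (Subtype.prop _)
  have key := D.mapCoeffsSelf.map_aeval_pow_natDegree ε hu hp
  rw [hkill, map_zero, hδu] at key
  exact ⟨p.natDegree, htf _ _ (Nat.factorial_ne_zero _) key.symm⟩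
end

section
/- Let R be a commutative ring and A a commutative R-algebra whose additive group is torsion-free. If D is a nilpotent R-derivation of A (D^N = 0 for some N), then for every a ∈ A, D(a) is nilpotent. -/
/-!
Induct on the least `k` with `D^[k] x = 0`: the induction hypothesis makes every higher derivative
`D^[i + 2] x` nilpotent. These generate a `D`-stable nil ideal `J` containing `D (D x)`, and modulo
such an ideal `D^[j] (x ^ n) ≡ n.descFactorial j • x ^ (n - j) * (D x) ^ j`. Hence
`0 = D^[N] (x ^ N) ≡ N! • (D x) ^ N` is nilpotent, and torsion-freeness removes the factor `N!`.
-/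

lemma IsNilpotent.of_nsmul {A : Type*} [CommSemiring A] [IsAddTorsionFree A] {n : ℕ} (hn : n ≠ 0)
    {a : A} (h : IsNilpotent (n • a)) : IsNilpotent a := by
  obtain ⟨m, hm⟩ := h
  rw [smul_pow] at hm
  exact ⟨m, (nsmul_eq_zero_iff_right (pow_ne_zero m hn)).1 hm⟩

namespace Derivation

variable {R A : Type*} [CommRing R] [CommRing A] [Algebra R A] (D : Derivation R A A)

lemma map_mem_span_of_forall_map_mem {S : Set A} (hS : ∀ s ∈ S, D s ∈ Ideal.span S) {y : A}
    (hy : y ∈ Ideal.span S) : D y ∈ Ideal.span S := by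
  induction hy using Submodule.span_induction with
  | mem s hs => exact hS s hs
  | zero => simp
  | add y z _ _ hy hz => rw [map_add]; exact add_mem hy hz
  | smul b y hy' hy =>
    rw [smul_eq_mul, leibniz, smul_eq_mul, smul_eq_mul]
    exact add_mem (Ideal.mul_mem_left _ _ hy) (Ideal.mul_mem_right _ _ hy')

lemma iterate_pow_sub_mem {J : Ideal A} (hJ : ∀ y ∈ J, D y ∈ J) {x : A} (hx : D (D x) ∈ J)
    (n j : ℕ) : D^[j] (x ^ n) - n.descFactorial j • (x ^ (n - j) * D x ^ j) ∈ J := by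
  induction j with
  | zero => simp
  | succ j ih =>
    have hDpow : D (D x ^ j) ∈ J := by
      rw [leibniz_pow, smul_eq_mul]
      exact Submodule.smul_of_tower_mem J j (Ideal.mul_mem_left _ _ hx)
    have hstep : D (n.descFactorial j • (x ^ (n - j) * D x ^ j)) =
        n.descFactorial (j + 1) • (x ^ (n - (j + 1)) * D x ^ (j + 1)) +
          n.descFactorial j • (x ^ (n - j) * D (D x ^ j)) := by
      have hDx : D (x ^ (n - j)) = (n - j) • x ^ (n - (j + 1)) • D x := by
        rw [leibniz_pow, show n - j - 1 = n - (j + 1) by omega]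
      rw [map_nsmul, leibniz, hDx, Nat.descFactorial_succ]
      simp only [smul_eq_mul, nsmul_eq_mul, Nat.cast_mul]
      ring
    have hsum := add_mem (hJ _ ih)
      (Ideal.mul_mem_left J (n.descFactorial j : A) (Ideal.mul_mem_left _ (x ^ (n - j)) hDpow))
    rw [map_sub, hstep, ← Function.iterate_succ_apply' D] at hsum
    convert hsum using 1
    simp only [nsmul_eq_mul]
    ring

lemma isNilpotent_apply_of_isNilpotent_iterate [IsAddTorsionFree A] {n : ℕ} {x : A}
    (hn : D^[n] (x ^ n) = 0) (hx : ∀ i, IsNilpotent (D^[i + 2] x)) : IsNilpotent (D x) := by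
  set J := Ideal.span (Set.range fun i ↦ D^[i + 2] x)
  have hJ : ∀ y ∈ J, D y ∈ J := by
    refine fun y ↦ D.map_mem_span_of_forall_map_mem ?_
    rintro _ ⟨i, rfl⟩
    rw [← Function.iterate_succ_apply' D]
    exact Ideal.subset_span ⟨i + 1, rfl⟩
  have hJnil : J ≤ nilradical A := by
    rw [Ideal.span_le]
    rintro _ ⟨i, rfl⟩
    exact hx i
  have hmem := D.iterate_pow_sub_mem hJ (Ideal.subset_span ⟨0, rfl⟩) n n
  rw [hn, zero_sub, neg_mem_iff, Nat.sub_self, pow_zero, one_mul, Nat.descFactorial_self] at hmem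
  exact (IsNilpotent.of_nsmul n.factorial_ne_zero (mem_nilradical.1 (hJnil hmem))).of_pow

lemma isNilpotent_apply_of_iterate_eq_zero [IsAddTorsionFree A] {n : ℕ}
    (hD : ∀ y, D^[n] y = 0) (k : ℕ) {x : A} (hx : D^[k] x = 0) : IsNilpotent (D x) := by
  induction k generalizing x with
  | zero => simp [show x = 0 from hx]
  | succ k ih =>
    refine D.isNilpotent_apply_of_isNilpotent_iterate (hD (x ^ n)) fun i ↦ ?_
    have hk : D^[k] (D^[i + 1] x) = 0 := by
      rw [← Function.iterate_add_apply, show k + (i + 1) = i + (k + 1) by omega,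
        Function.iterate_add_apply, hx, iterate_map_zero]
    simpa only [← Function.iterate_succ_apply' D] using ih hk

end Derivation

theorem stmt11_general {R A : Type*} [CommRing R] [CommRing A] [Algebra R A]
    (htf : ∀ (n : ℕ) (a : A), n ≠ 0 → n • a = 0 → a = 0)
    (D : Derivation R A A) (N : ℕ) (hnil : (D.toLinearMap) ^ N = 0)
    (a : A) : IsNilpotent (D a) := by
  have : IsAddTorsionFree A :=
    ⟨fun n hn a b hab ↦ sub_eq_zero.1 (htf n _ hn (by rw [nsmul_sub, sub_eq_zero]; exact hab))⟩
  have hD (y : A) : D^[N] y = 0 := by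
    simpa [Module.End.pow_apply] using LinearMap.congr_fun hnil y
  exact D.isNilpotent_apply_of_iterate_eq_zero hD N (hD a)

/-- If `A` is a commutative `R`-algebra whose additive group is torsion-free and `D` is a
nilpotent `R`-derivation of `A`, then `D a` is nilpotent for every `a ∈ A`. -/
theorem stmt11 {R A : Type*} [CommRing R] [CommRing A] [Algebra R A]
    (htf : ∀ (n : ℕ) (a : A), n ≠ 0 → n • a = 0 → a = 0)
    (D : Derivation R A A) (N : ℕ) (hN : 1 ≤ N) (hnil : (D.toLinearMap) ^ N = 0)
    (a : A) : IsNilpotent (D a) :=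
  stmt11_general htf D N hnil a
end

section
/- Let R be an integral domain of characteristic zero and A a reduced unital R-algebra (not necessarily commutative) that is torsion-free as an R-module. Then A has no nonzero nilpotent R-derivation: if D is an R-derivation of A with D^N = 0 for some N, then D = 0. -/
open Finset

lemma isAddTorsionFree_of_smul_eq_zero {R M : Type*} [Semiring R] [CharZero R] [AddCommGroup M]
    [Module R M] (htf : ∀ (r : R) (m : M), r • m = 0 → r ≠ 0 → m = 0) : IsAddTorsionFree M where
  nsmul_right_injective n hn a b hab := by
    refine sub_eq_zero.mp (htf n (a - b) ?_ (Nat.cast_ne_zero.mpr hn))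
    simpa [Nat.cast_smul_eq_nsmul, smul_sub, sub_eq_zero] using hab

namespace LinearMap

variable {R A : Type*} [Semiring R]

lemma pow_apply_mul_of_leibniz [Semiring A] [Module R A] (D : A →ₗ[R] A)
    (hD : ∀ x y : A, D (x * y) = D x * y + x * D y) (n : ℕ) (x y : A) :
    (D ^ n) (x * y) =
      ∑ ij ∈ antidiagonal n, n.choose ij.1 • ((D ^ ij.1) x * (D ^ ij.2) y) := by
  induction n with
  | zero => simp
  | succ n ih =>
    rw [sum_antidiagonal_choose_succ_nsmul (fun i j ↦ (D ^ i) x * (D ^ j) y) n]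
    simp only [pow_succ', Module.End.mul_apply, ih, map_sum, map_nsmul, hD, nsmul_add,
      sum_add_distrib]
    rw [add_comm]
    congr 1
    refine sum_congr rfl ?_
    rintro ⟨i, j⟩ hij
    rw [Nat.choose_symm_of_eq_add (HasAntidiagonal.mem_antidiagonal.mp hij).symm]

variable [Ring A] [Module R A] [IsReduced A] [IsAddTorsionFree A]

/-- In the Leibniz expansion of `D ^ (2n+2) (x * x)` only the middle term survives, so
`(D ^ (n+1) x) ^ 2` is killed by a nonzero binomial coefficient. -/
lemma pow_eq_zero_of_pow_succ_eq_zero_of_leibniz (D : A →ₗ[R] A)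
    (hD : ∀ x y : A, D (x * y) = D x * y + x * D y) {n : ℕ} (h : D ^ (n + 2) = 0) :
    D ^ (n + 1) = 0 := by
  have hvanish : ∀ k, n + 2 ≤ k → ∀ z, (D ^ k) z = 0 := fun k hk z ↦ by
    rw [← Nat.sub_add_cancel hk, pow_add, h, mul_zero, zero_apply]
  ext x
  set y := (D ^ (n + 1)) x
  have hmiddle : (2 * n + 2).choose (n + 1) • (y * y) = 0 := by
    rw [← hvanish (2 * n + 2) (by omega) (x * x), pow_apply_mul_of_leibniz D hD,
      sum_eq_single (n + 1, n + 1)]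
    · rintro ⟨i, j⟩ hij hne
      rw [HasAntidiagonal.mem_antidiagonal] at hij
      obtain hi | hj : n + 2 ≤ i ∨ n + 2 ≤ j := by
        by_contra! hlt
        exact hne (Prod.ext (by omega) (by omega))
      · rw [hvanish i hi, zero_mul, smul_zero]
      · rw [hvanish j hj, mul_zero, smul_zero]
    · simp [two_mul, add_add_add_comm]
  have hyy : y * y = 0 :=
    (nsmul_eq_zero_iff_right (Nat.choose_pos (by omega : n + 1 ≤ 2 * n + 2)).ne').mp hmiddle
  exact (show IsNilpotent y from ⟨2, by rw [sq, hyy]⟩).eq_zero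

lemma eq_zero_of_pow_eq_zero_of_leibniz (D : A →ₗ[R] A)
    (hD : ∀ x y : A, D (x * y) = D x * y + x * D y) {N : ℕ} (hnil : D ^ N = 0) : D = 0 := by
  have hsucc : D ^ (N + 1) = 0 := by rw [pow_succ', hnil, mul_zero]
  clear hnil
  induction N with
  | zero => simpa using hsucc
  | succ n ih => exact ih (pow_eq_zero_of_pow_succ_eq_zero_of_leibniz D hD hsucc)

end LinearMap

theorem stmt12_general {R A : Type*} [CommRing R] [CharZero R]
    [Ring A] [Algebra R A] [IsReduced A]
    (htf : ∀ (r : R) (a : A), r • a = 0 → r ≠ 0 → a = 0)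
    (D : A →ₗ[R] A) (hD : ∀ x y : A, D (x * y) = D x * y + x * D y)
    (N : ℕ) (hnil : D ^ N = 0) :
    D = 0 :=
  have := isAddTorsionFree_of_smul_eq_zero htf
  D.eq_zero_of_pow_eq_zero_of_leibniz hD hnil

/-- If `R` is an integral domain of characteristic zero and `A` is a reduced unital `R`-algebra
(not necessarily commutative) that is torsion-free as an `R`-module, then `A` has no nonzero
nilpotent `R`-derivation. -/
theorem stmt12 {R A : Type*} [CommRing R] [IsDomain R] [CharZero R]
    [Ring A] [Algebra R A] [IsReduced A]
    (htf : ∀ (r : R) (a : A), r • a = 0 → r ≠ 0 → a = 0)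
    (D : A →ₗ[R] A) (hD : ∀ x y : A, D (x * y) = D x * y + x * D y)
    (N : ℕ) (hnil : D ^ N = 0) :
    D = 0 :=
  stmt12_general htf D hD N hnil
end

section
/- Let A be a reduced algebra over a commutative ring R whose additive group (A,+) is torsion-free, D an R-derivation of A, r ≥ 1, and a ∈ A such that D^r(a^m) = 0 for all 1 ≤ m ≤ 2^{r-1}. Then D(a) = 0. -/
/-!
If `D^(k+1)` kills both `x` and `x²`, the Leibniz expansion of `D^(2k)(x²)` has a single surviving
term, `C(2k,k) (D^k x)²`; torsion-freeness and reducedness then give `D^k x = 0`. Applied to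
`x = a^m`, this lowers the order of the vanishing iterate by one while halving the range of
exponents `m`, so after `r - 1` steps we reach `D a = 0`.
-/

open Finset

theorem Module.End.pow_apply_mul {R A : Type*} [Semiring R] [NonUnitalNonAssocSemiring A]
    [Module R A] (D : Module.End R A) (hD : ∀ x y : A, D (x * y) = D x * y + x * D y)
    (n : ℕ) (x y : A) :
    (D ^ n) (x * y) = ∑ ij ∈ antidiagonal n, n.choose ij.1 • ((D ^ ij.1) x * (D ^ ij.2) y) := by
  induction n with
  | zero => simp
  | succ n ih =>
    rw [sum_antidiagonal_choose_succ_nsmul (fun i j ↦ (D ^ i) x * (D ^ j) y) n]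
    simp only [pow_succ', Module.End.mul_apply, ih, map_sum, map_nsmul, hD, nsmul_add,
      sum_add_distrib]
    rw [add_comm]
    congr 1
    refine sum_congr rfl ?_
    rintro ⟨i, j⟩ hij
    rw [Nat.choose_symm_of_eq_add (mem_antidiagonal.1 hij).symm]

theorem Module.End.pow_apply_eq_zero_of_pow_succ_apply_sq_eq_zero {R A : Type*} [Semiring R]
    [Semiring A] [Module R A] [IsReduced A]
    (htf : ∀ (n : ℕ) (y : A), n ≠ 0 → n • y = 0 → y = 0)
    (D : Module.End R A) (hD : ∀ x y : A, D (x * y) = D x * y + x * D y)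
    {k : ℕ} (hk : 1 ≤ k) {x : A} (hx : (D ^ (k + 1)) x = 0) (hx2 : (D ^ (k + 1)) (x ^ 2) = 0) :
    (D ^ k) x = 0 := by
  have hvanish : ∀ i, k + 1 ≤ i → (D ^ i) x = 0 := fun i hi ↦ Module.End.pow_map_zero_of_le hi hx
  have hsum : (2 * k).choose k • ((D ^ k) x * (D ^ k) x) = 0 := by
    rw [← Module.End.pow_map_zero_of_le (by omega : k + 1 ≤ 2 * k) hx2, pow_two,
      D.pow_apply_mul hD, sum_eq_single_of_mem (k, k) (mem_antidiagonal.2 (two_mul k).symm)]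
    rintro ⟨i, j⟩ hij hne
    have hij : i + j = 2 * k := mem_antidiagonal.1 hij
    rcases Nat.lt_or_ge k i with hi | hi
    · simp [hvanish i hi]
    · have hj : k + 1 ≤ j := by
        by_contra
        exact hne (Prod.ext (by omega) (by omega))
      simp [hvanish j hj]
  have hsq : (D ^ k) x * (D ^ k) x = 0 := htf _ _ (Nat.choose_pos (by omega)).ne' hsum
  exact IsReduced.eq_zero _ ⟨2, by rw [pow_two, hsq]⟩

theorem Module.End.pow_apply_eq_zero_of_pow_add_apply_pow_eq_zero {R A : Type*} [Semiring R]
    [Semiring A] [Module R A] [IsReduced A]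
    (htf : ∀ (n : ℕ) (y : A), n ≠ 0 → n • y = 0 → y = 0)
    (D : Module.End R A) (hD : ∀ x y : A, D (x * y) = D x * y + x * D y) (a : A) (n : ℕ) :
    ∀ {k : ℕ}, 1 ≤ k → (∀ m : ℕ, 1 ≤ m → m ≤ 2 ^ n → (D ^ (k + n)) (a ^ m) = 0) →
      (D ^ k) a = 0 := by
  induction n with
  | zero => exact fun _ h ↦ by simpa using h 1 le_rfl le_rfl
  | succ n ih =>
    intro k hk h
    refine ih hk fun m hm₁ hm₂ ↦ ?_
    have h2m : m * 2 ≤ 2 ^ (n + 1) := by rw [pow_succ]; omega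
    refine D.pow_apply_eq_zero_of_pow_succ_apply_sq_eq_zero htf hD (by omega)
      (h m hm₁ (by omega)) ?_
    rw [← pow_mul]
    exact h (m * 2) (by omega) h2m

/-- Let `A` be a reduced `R`-algebra (not necessarily commutative) whose additive group is
torsion-free, `D` an `R`-derivation, `r ≥ 1` and `a ∈ A` with `D^r(a^m) = 0` for all
`1 ≤ m ≤ 2^{r-1}`. Then `D a = 0`. -/
theorem stmt13 {R A : Type*} [CommRing R] [Ring A] [Algebra R A] [IsReduced A]
    (htf : ∀ (n : ℕ) (a : A), n ≠ 0 → n • a = 0 → a = 0)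
    (D : A →ₗ[R] A) (hD : ∀ x y : A, D (x * y) = D x * y + x * D y)
    (r : ℕ) (hr : 1 ≤ r) (a : A)
    (h : ∀ m : ℕ, 1 ≤ m → m ≤ 2 ^ (r - 1) → (D ^ r) (a ^ m) = 0) :
    D a = 0 := by
  obtain ⟨n, rfl⟩ := Nat.exists_eq_add_of_le hr
  rw [Nat.add_sub_cancel_left] at h
  simpa using Module.End.pow_apply_eq_zero_of_pow_add_apply_pow_eq_zero htf D hD a n le_rfl h
end

section
/- Let A be a reduced algebra over a commutative ring R with torsion-free additive group, and D an R-derivation of A. Then for every r ≥ 1, the radical of Ker(D^r) equals the radical of Ker(D), where the radical of V is the set of u ∈ A with u^m ∈ V for all sufficiently large m. -/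
/-!
If `D^(s+1) v = 0`, the Leibniz rule collapses `D^(2s) (v * v)` to the single middle term
`C(2s, s) • (D^s v)^2`. So if `D^(s+1)` kills all large powers of `u`, then so does `D^(2s)`
(for `s ≥ 1`), and torsion-freeness plus reducedness force `D^s (u^m) = 0` for all large `m`.
Descending from `s = r - 1` to `s = 1` gives `r(Ker D^r) ⊆ r(Ker D)`; the other inclusion is
immediate from `Ker D ⊆ Ker D^r`.
-/

open Finset

/-- The radical `r(V)`. -/
def powRadical {A : Type*} [Monoid A] (V : Set A) : Set A :=
  {u | ∃ N : ℕ, ∀ m ≥ N, u ^ m ∈ V}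

lemma powRadical_mono {A : Type*} [Monoid A] {V W : Set A} (h : V ⊆ W) :
    powRadical V ⊆ powRadical W :=
  fun _ ⟨N, hN⟩ ↦ ⟨N, fun m hm ↦ h (hN m hm)⟩

namespace Module.End

variable {R A : Type*} [CommSemiring R] [Semiring A] [Module R A] {D : Module.End R A}

lemma pow_apply_mul_eq_sum_antidiagonal (hD : ∀ x y : A, D (x * y) = D x * y + x * D y)
    (n : ℕ) (x y : A) :
    (D ^ n) (x * y) = ∑ ij ∈ antidiagonal n, n.choose ij.1 • ((D ^ ij.1) x * (D ^ ij.2) y) := by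
  induction n with
  | zero => simp
  | succ n ih =>
    rw [sum_antidiagonal_choose_succ_nsmul (fun i j ↦ (D ^ i) x * (D ^ j) y) n]
    simp only [pow_succ', mul_apply, ih, map_sum, map_nsmul, hD, nsmul_add, sum_add_distrib]
    rw [add_comm]
    congr 1
    refine sum_congr rfl fun ⟨i, j⟩ hij ↦ ?_
    rw [Nat.choose_symm_of_eq_add (HasAntidiagonal.mem_antidiagonal.1 hij).symm]

lemma pow_two_mul_apply_mul_self (hD : ∀ x y : A, D (x * y) = D x * y + x * D y) {s : ℕ}
    {v : A} (hv : (D ^ (s + 1)) v = 0) :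
    (D ^ (2 * s)) (v * v) = (2 * s).choose s • ((D ^ s) v * (D ^ s) v) := by
  rw [pow_apply_mul_eq_sum_antidiagonal hD, sum_eq_single (s, s)]
  · rintro ⟨i, j⟩ hij hne
    rw [HasAntidiagonal.mem_antidiagonal] at hij
    rw [Ne, Prod.mk.injEq] at hne
    rcases le_or_gt (s + 1) i with hi | hi
    · rw [pow_map_zero_of_le hi hv, zero_mul, smul_zero]
    · rw [pow_map_zero_of_le (l := j) (by omega) hv, mul_zero, smul_zero]
  · simp [two_mul]

lemma pow_apply_eq_zero_of_pow_two_mul_apply_mul_self_eq_zero [IsReduced A]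
    (htf : ∀ (n : ℕ) (a : A), n ≠ 0 → n • a = 0 → a = 0)
    (hD : ∀ x y : A, D (x * y) = D x * y + x * D y) {s : ℕ} {v : A}
    (hv : (D ^ (s + 1)) v = 0) (hvv : (D ^ (2 * s)) (v * v) = 0) :
    (D ^ s) v = 0 := by
  rw [pow_two_mul_apply_mul_self hD hv] at hvv
  have hsq : (D ^ s) v * (D ^ s) v = 0 := htf _ _ (Nat.choose_pos (by omega)).ne' hvv
  exact IsReduced.eq_zero _ ⟨2, by rwa [sq]⟩

lemma powRadical_ker_pow_succ [IsReduced A] (htf : ∀ (n : ℕ) (a : A), n ≠ 0 → n • a = 0 → a = 0)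
    (hD : ∀ x y : A, D (x * y) = D x * y + x * D y) {s : ℕ} (hs : 1 ≤ s) :
    powRadical {v | (D ^ (s + 1)) v = 0} = powRadical {v | (D ^ s) v = 0} := by
  refine subset_antisymm ?_ (powRadical_mono fun v hv ↦ pow_map_zero_of_le s.le_succ hv)
  rintro u ⟨N, hN⟩
  refine ⟨N, fun m hm ↦ pow_apply_eq_zero_of_pow_two_mul_apply_mul_self_eq_zero htf hD
    (hN m hm) ?_⟩
  rw [← pow_add, ← two_mul]
  exact pow_map_zero_of_le (by omega) (hN (2 * m) (by omega))

end Module.End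

/-- Let `A` be a reduced `R`-algebra (not necessarily commutative) with torsion-free additive
group and `D` an `R`-derivation of `A`. Then for every `r ≥ 1`, the radical of `Ker D^r`
equals the radical of `Ker D`. -/
theorem stmt14 {R A : Type*} [CommRing R] [Ring A] [Algebra R A] [IsReduced A]
    (htf : ∀ (n : ℕ) (a : A), n ≠ 0 → n • a = 0 → a = 0)
    (D : A →ₗ[R] A) (hD : ∀ x y : A, D (x * y) = D x * y + x * D y)
    (r : ℕ) (hr : 1 ≤ r) :
    {u : A | ∃ N : ℕ, ∀ m ≥ N, (D ^ r) (u ^ m) = 0} =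
      {u : A | ∃ N : ℕ, ∀ m ≥ N, D (u ^ m) = 0} := by
  change powRadical {v | (D ^ r) v = 0} = powRadical {v | (D ^ 1) v = 0}
  induction r, hr using Nat.le_induction with
  | base => rfl
  | succ s hs ih => rw [Module.End.powRadical_ker_pow_succ htf hD hs, ih]
end

section
/- Let A be a commutative ring, D a derivation of A, and f ∈ A. Then for every n ≥ 1, the determinant of the n×n matrix whose (i,j) entry is D^{i-1}(f^j) equals (∏_{k=1}^{n-1} k!) · (Df)^{n(n-1)/2} · f^n. -/
/-!
By Leibniz' rule, `D^i (f^m) = ∑_k c_{ik} m(m-1)⋯(m-k+1) f^{m-k}` with coefficients `c_{ik}`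
independent of `m`, vanishing for `k > i`, and with `c_{ii} = (Df)^i`. Hence the matrix factors
as `C · diag(k!) · B`, where `C = (c_{ik})` is lower triangular with determinant
`(Df)^{0+1+⋯+(n-1)}` and `B_{kj} = C(j+1,k) f^{j+1-k}` holds the coefficients of `(X+f)^{j+1}`.
Pascal's rule writes `B` as the (truncated) matrix of multiplication by `X + f`, lower triangular
with diagonal `f`, times the unitriangular matrix of the coefficients of `(X+f)^j`; so
`det B = f^n`.
-/

open Finset

section IteratedDerivationOfPower

variable {R A : Type*} [CommSemiring R] [CommSemiring A] [Algebra R A] (D : Derivation R A A)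
  (f : A)

theorem Derivation.map_descFactorial_mul_pow (m k : ℕ) :
    D (m.descFactorial k * f ^ (m - k)) = m.descFactorial (k + 1) * f ^ (m - (k + 1)) * D f := by
  rw [D.leibniz, D.leibniz_pow, D.map_natCast, smul_zero, add_zero, Nat.descFactorial_succ,
    show m - (k + 1) = m - k - 1 by omega]
  simp only [smul_eq_mul, nsmul_eq_mul]
  push_cast
  ring

/-- The coefficients of `D^[i] (f ^ m)` on the terms `m.descFactorial k * f ^ (m - k)`. -/
def iterPowCoeff : ℕ → ℕ → A
  | 0, 0 => 1
  | 0, _ + 1 => 0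
  | i + 1, 0 => D (iterPowCoeff i 0)
  | i + 1, k + 1 => D (iterPowCoeff i (k + 1)) + iterPowCoeff i k * D f

theorem iterPowCoeff_eq_zero_of_lt {i k : ℕ} (h : i < k) : iterPowCoeff D f i k = 0 := by
  induction i generalizing k with
  | zero => obtain ⟨k, rfl⟩ := Nat.exists_eq_add_one_of_ne_zero h.ne'; rfl
  | succ i ih =>
    obtain ⟨k, rfl⟩ := Nat.exists_eq_add_one_of_ne_zero (by omega : k ≠ 0)
    simp only [iterPowCoeff, ih (by omega : i < k + 1), ih (by omega : i < k), map_zero, zero_mul,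
      add_zero]

theorem iterPowCoeff_self (i : ℕ) : iterPowCoeff D f i i = D f ^ i := by
  induction i with
  | zero => rw [pow_zero]; rfl
  | succ i ih =>
    simp only [iterPowCoeff, iterPowCoeff_eq_zero_of_lt D f i.lt_succ_self, map_zero, zero_add,
      ih, pow_succ]

theorem iterate_pow_eq_sum (m : ℕ) {i N : ℕ} (hN : i < N) :
    D^[i] (f ^ m) =
      ∑ k ∈ range N, iterPowCoeff D f i k * (m.descFactorial k * f ^ (m - k)) := by
  induction i generalizing N with
  | zero =>
    obtain ⟨N, rfl⟩ := Nat.exists_eq_add_one_of_ne_zero hN.ne'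
    simp [sum_range_succ', iterPowCoeff]
  | succ i ih =>
    obtain ⟨N, rfl⟩ := Nat.exists_eq_add_one_of_ne_zero (by omega : N ≠ 0)
    rw [Function.iterate_succ_apply', ih (by omega : i < N + 1)]
    set a : ℕ → A := fun k => m.descFactorial k * f ^ (m - k)
    have hDa (k : ℕ) : D (a k) = a (k + 1) * D f := D.map_descFactorial_mul_pow f m k
    calc D (∑ k ∈ range (N + 1), iterPowCoeff D f i k * a k)
        = ∑ k ∈ range (N + 1), D (iterPowCoeff D f i k) * a k +
            ∑ k ∈ range (N + 1), iterPowCoeff D f i k * D f * a (k + 1) := by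
          rw [map_sum, ← sum_add_distrib]
          refine sum_congr rfl fun k _ => ?_
          rw [D.leibniz, hDa, smul_eq_mul, smul_eq_mul]
          ring
      _ = D (iterPowCoeff D f i 0) * a 0 +
            ∑ k ∈ range N, D (iterPowCoeff D f i (k + 1)) * a (k + 1) +
            ∑ k ∈ range N, iterPowCoeff D f i k * D f * a (k + 1) := by
          rw [sum_range_succ' _ N, sum_range_succ _ N,
            iterPowCoeff_eq_zero_of_lt D f (by omega : i < N)]
          ring
      _ = ∑ k ∈ range (N + 1), iterPowCoeff D f (i + 1) k * a k := by
          rw [sum_range_succ' _ N]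
          simp only [iterPowCoeff, add_mul, sum_add_distrib]
          ring

end IteratedDerivationOfPower

theorem choose_succ_succ_mul_pow {R : Type*} [CommSemiring R] (f : R) (M m : ℕ) :
    ((M + 1).choose (m + 1) : R) * f ^ (M + 1 - (m + 1)) =
      f * ((M.choose (m + 1) : R) * f ^ (M - (m + 1))) + (M.choose m : R) * f ^ (M - m) := by
  rw [Nat.choose_succ_succ, Nat.succ_sub_succ, Nat.cast_add, add_mul, add_comm]
  rcases lt_or_ge m M with hm | hm
  · rw [show M - m = M - (m + 1) + 1 by omega, pow_succ]
    ring
  · rw [Nat.choose_eq_zero_of_lt (by omega : M < m + 1)]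
    ring

section BinomialMatrix

variable {R : Type*} [CommRing R]

/-- The coefficients of `(X + f) ^ (j + a)`, `j < n`, in the monomials `X ^ k`, `k < n`. -/
def binomialMatrix (n a : ℕ) (f : R) : Matrix (Fin n) (Fin n) R :=
  Matrix.of fun k j => ((j + a : ℕ).choose k : R) * f ^ (j + a - k)

/-- Multiplication by `X + f`, truncated to the monomials `X ^ k`, `k < n`. -/
def mulXAddMatrix (n : ℕ) (f : R) : Matrix (Fin n) (Fin n) R :=
  Matrix.of fun k l => if l = k then f else if (l : ℕ) + 1 = k then 1 else 0

theorem binomialMatrix_succ (n a : ℕ) (f : R) :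
    binomialMatrix n (a + 1) f = mulXAddMatrix n f * binomialMatrix n a f := by
  ext ⟨k, hk⟩ j
  simp only [binomialMatrix, mulXAddMatrix, Matrix.mul_apply, Matrix.of_apply, ite_mul, one_mul,
    zero_mul, ← add_assoc]
  cases k with
  | zero =>
    rw [sum_eq_single_of_mem ⟨0, hk⟩ (mem_univ _) fun l _ hl => by simp [hl]]
    simp [pow_succ']
  | succ m =>
    rw [sum_eq_add_of_mem ⟨m + 1, hk⟩ ⟨m, by omega⟩ (mem_univ _) (mem_univ _)
      (by simp [Fin.ext_iff]) fun l _ hl => by grind]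
    simp only [Fin.ext_iff, if_true]
    rw [if_neg m.ne_add_one]
    exact choose_succ_succ_mul_pow f _ m

theorem det_mulXAddMatrix (n : ℕ) (f : R) : (mulXAddMatrix n f).det = f ^ n := by
  rw [Matrix.det_of_isLowerTriangular _ fun k l (h : k < l) => ?_]
  · simp [mulXAddMatrix]
  · simp only [mulXAddMatrix, Matrix.of_apply]
    rw [if_neg h.ne', if_neg (by omega)]

theorem det_binomialMatrix_zero (n : ℕ) (f : R) : (binomialMatrix n 0 f).det = 1 := by
  rw [Matrix.det_of_isUpperTriangular fun j k (h : k < j) => ?_]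
  · simp [binomialMatrix]
  · simp [binomialMatrix, Nat.choose_eq_zero_of_lt (show (k : ℕ) < j from h)]

theorem det_binomialMatrix (n a : ℕ) (f : R) : (binomialMatrix n a f).det = f ^ (n * a) := by
  induction a with
  | zero => rw [mul_zero, pow_zero, det_binomialMatrix_zero]
  | succ a ih =>
    rw [binomialMatrix_succ, Matrix.det_mul, det_mulXAddMatrix, ih, mul_add_one, pow_add, mul_comm]

end BinomialMatrix

section IteratedDerivationMatrix

variable {R A : Type*} [CommSemiring R] [CommRing A] [Algebra R A] (D : Derivation R A A)
  (f : A)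

theorem iterate_pow_matrix_eq_mul (n : ℕ) :
    Matrix.of (fun i j : Fin n => D^[i] (f ^ ((j : ℕ) + 1))) =
      Matrix.of (fun i k : Fin n => iterPowCoeff D f i k) *
        (Matrix.diagonal (fun k : Fin n => ((k : ℕ).factorial : A)) * binomialMatrix n 1 f) := by
  ext i j
  rw [Matrix.of_apply, iterate_pow_eq_sum D f _ i.isLt, Matrix.mul_apply,
    ← Fin.sum_univ_eq_sum_range]
  refine sum_congr rfl fun k _ => ?_
  simp only [Matrix.diagonal_mul, binomialMatrix, Matrix.of_apply,
    Nat.descFactorial_eq_factorial_mul_choose]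
  push_cast
  ring

theorem det_iterPowCoeff (n : ℕ) :
    (Matrix.of fun i k : Fin n => iterPowCoeff D f i k).det = D f ^ (n * (n - 1) / 2) := by
  have hlower : (Matrix.of fun i k : Fin n => iterPowCoeff D f i k).IsLowerTriangular :=
    fun i k h => iterPowCoeff_eq_zero_of_lt D f (show (i : ℕ) < k from h)
  rw [Matrix.det_of_isLowerTriangular _ hlower]
  simp only [Matrix.of_apply, iterPowCoeff_self]
  rw [Fin.prod_univ_eq_prod_range (fun i => D f ^ i), prod_pow_eq_pow_sum, sum_range_id]

end IteratedDerivationMatrix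

theorem stmt15_general {A : Type*} [CommRing A] (D : Derivation ℤ A A) (f : A)
    (n : ℕ) :
    Matrix.det (Matrix.of fun i j : Fin n => (⇑D)^[(i : ℕ)] (f ^ ((j : ℕ) + 1))) =
      (∏ k ∈ Finset.range n, (Nat.factorial k : A)) *
        (D f) ^ (n * (n - 1) / 2) * f ^ n := by
  rw [iterate_pow_matrix_eq_mul, Matrix.det_mul, Matrix.det_mul, det_iterPowCoeff,
    Matrix.det_diagonal, det_binomialMatrix, mul_one,
    Fin.prod_univ_eq_prod_range (fun k => (k.factorial : A))]
  ring

/-- Let `A` be a commutative ring, `D` a derivation of `A` and `f ∈ A`. For every `n ≥ 1`,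
the determinant of the `n × n` matrix with `(i,j)` entry `D^{i-1}(f^j)` (indices from `1`)
equals `(∏_{k=1}^{n-1} k!) (Df)^{n(n-1)/2} f^n`. -/
theorem stmt15 {A : Type*} [CommRing A] (D : Derivation ℤ A A) (f : A)
    (n : ℕ) (hn : 1 ≤ n) :
    Matrix.det (Matrix.of fun i j : Fin n => (⇑D)^[(i : ℕ)] (f ^ ((j : ℕ) + 1))) =
      (∏ k ∈ Finset.range n, (Nat.factorial k : A)) *
        (D f) ^ (n * (n - 1) / 2) * f ^ n :=
  stmt15_general D f n
end

section
/- Let A be a commutative ring, D a derivation of A, f ∈ A, and k ≥ 2. Then there exist elements α_{k,1},…,α_{k,k-1} ∈ A such that for each 0 ≤ i ≤ k-1: D^i(f^k) - Σ_{j=1}^{k-1} α_{k,j} f^{k-j} D^i(f^j) equals (k-1)!·(Df)^{k-1}·f if i = k-1, and 0 otherwise. -/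
/-!
Put `T n i = ∑ₘ (-1)^(n-m) (n choose m) f^(n-m) D^i(f^(m+1))`: this is `D^i` applied to
`y (y - f)^n` in the variable `y` alone, then evaluated at `y = f`. So `T n 0 = f · 0^n`, and the
Leibniz rule together with `(n+1-m) (n+1 choose m) = (n+1) (n choose m)` gives
`T (n+1) (i+1) = D (T (n+1) i) + (n+1) Df · T n i`. By induction on `i`, `T n i = 0` for `i < n`
and `T n n = n! (Df)^n f`; the theorem is the case `n = k - 1`, with the term `m = n` split off.
-/

open Finset Nat

namespace Derivation

variable {R A : Type*} [CommSemiring R] [CommRing A] [Algebra R A] (D : Derivation R A A) (f : A)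

def binomialIterate (n i : ℕ) : A :=
  ∑ m ∈ range (n + 1), (-1) ^ (n - m) * n.choose m * f ^ (n - m) * D^[i] (f ^ (m + 1))

lemma binomialIterate_zero_right (n : ℕ) : binomialIterate D f n 0 = f * 0 ^ n := by
  rw [← add_neg_cancel f, add_pow, mul_sum]
  refine sum_congr rfl fun m _ => ?_
  rw [neg_pow, Function.iterate_zero_apply]
  ring

lemma map_neg_one_pow_mul_natCast_mul (k c : ℕ) (a : A) :
    D ((-1) ^ k * c * a) = (-1) ^ k * c * D a := by
  simp [leibniz, leibniz_pow]

lemma binomialIterate_succ_succ (n i : ℕ) :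
    binomialIterate D f (n + 1) (i + 1) =
      D (binomialIterate D f (n + 1) i) + (n + 1) * D f * binomialIterate D f n i := by
  have hterm : ∀ m ∈ range (n + 1),
      (-1) ^ (n + 1 - m) * ((n + 1).choose m : A) * f ^ (n + 1 - m) * D^[i + 1] (f ^ (m + 1)) =
        D ((-1) ^ (n + 1 - m) * ((n + 1).choose m : A) * f ^ (n + 1 - m) * D^[i] (f ^ (m + 1)))
          + (n + 1) * D f * ((-1) ^ (n - m) * n.choose m * f ^ (n - m) * D^[i] (f ^ (m + 1))) := by
    intro m hm
    obtain ⟨k, rfl⟩ := Nat.exists_eq_add_of_le (Nat.lt_succ_iff.mp (mem_range.mp hm))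
    have hchoose : ((m + k + 1).choose m : A) * (k + 1) = (m + k + 1) * (m + k).choose m := by
      have h := Nat.choose_mul_succ_eq (m + k) m
      rw [show m + k + 1 - m = k + 1 by omega, mul_comm] at h
      exact_mod_cast congrArg (Nat.cast : ℕ → A) h.symm
    rw [show m + k + 1 - m = k + 1 by omega, Nat.add_sub_cancel_left,
      mul_assoc _ (f ^ (k + 1)) (D^[i] _),
      map_neg_one_pow_mul_natCast_mul, leibniz, leibniz_pow, Function.iterate_succ_apply']
    simp only [smul_eq_mul, nsmul_eq_mul, Nat.add_sub_cancel]
    push_cast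
    linear_combination (-1) ^ k * f ^ k * D f * D^[i] (f ^ (m + 1)) * hchoose
  rw [binomialIterate, sum_range_succ, sum_congr rfl hterm, sum_add_distrib, binomialIterate,
    binomialIterate, map_sum, mul_sum, sum_range_succ _ (n + 1)]
  simp only [Nat.sub_self, pow_zero, Nat.choose_self, Nat.cast_one, one_mul,
    Function.iterate_succ_apply']
  exact add_right_comm _ _ _

theorem binomialIterate_of_le {n i : ℕ} (h : i ≤ n) :
    binomialIterate D f n i = if i = n then n ! * D f ^ n * f else 0 := by
  induction i generalizing n with
  | zero => cases n <;> simp [binomialIterate_zero_right]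
  | succ i ih =>
    obtain ⟨n, rfl⟩ := Nat.exists_eq_add_of_le' (Nat.one_le_of_lt h)
    rw [binomialIterate_succ_succ, ih (by omega), ih (by omega), if_neg (by omega)]
    by_cases hin : i = n
    · subst hin
      rw [if_pos rfl, if_pos rfl, map_zero, zero_add, Nat.factorial_succ]
      push_cast
      ring
    · simp [hin]

lemma binomialIterate_eq_sub_sum (n i : ℕ) :
    binomialIterate D f n i = D^[i] (f ^ (n + 1)) -
      ∑ j ∈ Icc 1 n, -((-1) ^ (n + 1 - j) * n.choose (j - 1)) * f ^ (n + 1 - j) * D^[i] (f ^ j) := by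
  rw [binomialIterate, sum_range_succ, ← Ico_add_one_right_eq_Icc, sum_Ico_eq_sum_range]
  simp only [Nat.add_sub_cancel, Nat.sub_self, Nat.choose_self, add_comm 1, Nat.add_sub_add_right,
    neg_mul, sum_neg_distrib, sub_neg_eq_add, pow_zero, Nat.cast_one, one_mul]
  exact add_comm _ _

end Derivation

/-- Let `A` be a commutative ring, `D` a derivation of `A`, `f ∈ A` and `k ≥ 2`. Then there
exist `α_{k,1},…,α_{k,k-1} ∈ A` such that for each `0 ≤ i ≤ k-1`:
`D^i(f^k) - ∑_{j=1}^{k-1} α_{k,j} f^{k-j} D^i(f^j)` equals `(k-1)! (Df)^{k-1} f` if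
`i = k-1` and `0` otherwise. -/
theorem stmt16 {A : Type*} [CommRing A] (D : Derivation ℤ A A) (f : A)
    (k : ℕ) (hk : 2 ≤ k) :
    ∃ α : ℕ → A, ∀ i : ℕ, i ≤ k - 1 →
      (⇑D)^[i] (f ^ k) - ∑ j ∈ Finset.Icc 1 (k - 1), α j * f ^ (k - j) * (⇑D)^[i] (f ^ j) =
        if i = k - 1 then (Nat.factorial (k - 1) : A) * (D f) ^ (k - 1) * f else 0 := by
  obtain ⟨n, rfl⟩ := Nat.exists_eq_add_of_le' (Nat.one_le_of_lt hk)
  refine ⟨fun j => -((-1) ^ (n + 1 - j) * n.choose (j - 1)), fun i hi => ?_⟩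
  rw [Nat.add_sub_cancel] at hi ⊢
  rw [← D.binomialIterate_eq_sub_sum, D.binomialIterate_of_le f hi]
end

section
/- For every n ≥ 1, the determinant of the n×n matrix whose (i,j) entry is (i+j-2)! equals (∏_{k=1}^{n-1} k!)². -/
/-!
The Hankel matrix `((i + j)!)` factors as `L * Lᵀ` with `L i k = i! * (i choose k)`, because
Vandermonde's identity gives `i! * j! * ∑ k, (i choose k) * (j choose k) = (i + j)!`.
Since `L` is lower triangular with diagonal `k!`, the determinant is `(∏ k!)²`.
-/

open Finset Matrix
open scoped Nat

namespace Nat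

theorem sum_range_succ_choose_mul_choose (i j : ℕ) :
    ∑ k ∈ range (i + 1), i.choose k * j.choose k = (i + j).choose i := by
  conv_rhs => rw [add_choose_eq, Finset.Nat.sum_antidiagonal_eq_sum_range_succ_mk,
    ← sum_range_reflect]
  refine sum_congr rfl fun k hk => ?_
  have hk : k ≤ i := mem_range_succ_iff.mp hk
  rw [Nat.succ_sub_one, Nat.sub_sub_self hk, choose_symm hk]

theorem sum_range_choose_mul_choose_of_lt {i n : ℕ} (j : ℕ) (hi : i < n) :
    ∑ k ∈ range n, i.choose k * j.choose k = (i + j).choose i := by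
  rw [← sum_range_succ_choose_mul_choose]
  refine (sum_subset (range_subset_range.2 hi) fun k _ hk => ?_).symm
  rw [choose_eq_zero_of_lt (by simpa using hk), zero_mul]

end Nat

section FactorialHankel

variable (R : Type*) [CommRing R] (n : ℕ)

def factorialChooseMatrix : Matrix (Fin n) (Fin n) R :=
  of fun i k => ((i : ℕ)! * (i : ℕ).choose k : ℕ)

theorem factorialChooseMatrix_mul_transpose :
    factorialChooseMatrix R n * (factorialChooseMatrix R n)ᵀ =
      of fun i j : Fin n => (((i : ℕ) + j)! : R) := by
  ext i j
  have entry_eq : ∑ k : Fin n, (i : ℕ)! * (i : ℕ).choose k * ((j : ℕ)! * (j : ℕ).choose k)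
      = ((i : ℕ) + j)! := by
    calc _ = (i : ℕ)! * (j : ℕ)! * ∑ k ∈ range n, (i : ℕ).choose k * (j : ℕ).choose k := by
          rw [mul_sum, ← Fin.sum_univ_eq_sum_range]; congr! 1 with k; ring
      _ = ((i : ℕ) + j)! := by
          rw [Nat.sum_range_choose_mul_choose_of_lt _ i.isLt, Nat.choose_symm_add,
            ← Nat.add_choose_mul_factorial_mul_factorial]; ring
  simp only [mul_apply, transpose_apply, factorialChooseMatrix, of_apply]
  rw [← entry_eq, Nat.cast_sum]
  simp only [Nat.cast_mul]

theorem factorialChooseMatrix_isLowerTriangular :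
    (factorialChooseMatrix R n).IsLowerTriangular := fun i k hik => by
  simp [factorialChooseMatrix, Nat.choose_eq_zero_of_lt (show (i : ℕ) < k from hik)]

theorem det_factorialChooseMatrix :
    (factorialChooseMatrix R n).det = ∏ k ∈ range n, (k ! : R) := by
  rw [det_of_isLowerTriangular _ (factorialChooseMatrix_isLowerTriangular R n),
    ← Fin.prod_univ_eq_prod_range]
  simp [factorialChooseMatrix]

end FactorialHankel

theorem stmt17_general (n : ℕ) :
    Matrix.det (Matrix.of fun i j : Fin n => (Nat.factorial ((i : ℕ) + (j : ℕ)) : ℤ)) =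
      (∏ k ∈ Finset.range n, (Nat.factorial k : ℤ)) ^ 2 := by
  rw [← factorialChooseMatrix_mul_transpose, det_mul, det_transpose, det_factorialChooseMatrix, sq]

/-- For every `n ≥ 1`, the determinant of the `n × n` matrix whose `(i,j)` entry is
`(i+j-2)!` (indices from `1`) equals `(∏_{k=1}^{n-1} k!)²`. -/
theorem stmt17 (n : ℕ) (hn : 1 ≤ n) :
    Matrix.det (Matrix.of fun i j : Fin n => (Nat.factorial ((i : ℕ) + (j : ℕ)) : ℤ)) =
      (∏ k ∈ Finset.range n, (Nat.factorial k : ℤ)) ^ 2 :=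
  stmt17_general n
end

section
/- Let A be a commutative ring, D a derivation of A, P(ξ) = Σ_{i=0}^d cᵢξ^i ∈ A[ξ] a nonzero polynomial, and f ∈ A with P(D)(f^m) = 0 for all 1 ≤ m ≤ d+1. Then for each 0 ≤ i ≤ d: (∏_{k=1}^d k!)·cᵢ·(Df)^{d(d+1)/2}·f^{d+1} = 0. -/
/-!
The hypotheses say that the matrix `M = (D^j (f^(m+1)))_{m,j ≤ d}` kills the vector
`(c_0, …, c_d)`, so `det M • c = 0` (multiply by the adjugate). Expanding
`D^j (f * f^m) = ∑_k (m choose k) f^(m-k) E_{j,k}` (`E = powCoeff D f f`) factors `M` as a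
unitriangular binomial matrix times the upper triangular matrix with `E_{j,k}` in row `k`,
column `j`, and diagonal `j! (D f)^j f`, whence
`det M = (∏_{k ≤ d} k!) (D f)^(d(d+1)/2) f^(d+1)`.
-/

open Finset Matrix
open scoped Nat

namespace Derivation

section Expansion

variable {R A : Type*} [CommSemiring R] [CommSemiring A] [Algebra R A]
  (D : Derivation R A A) (f g : A)

/-- The coefficients in `D^[j] (g * f ^ m) = ∑ k, m.choose k * f ^ (m - k) * powCoeff D f g j k`
(`iterate_mul_pow`); for `g = 1` they are `k!` times the partial Bell polynomials
`B_{j,k}(D f, D² f, …)`. -/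
def powCoeff : ℕ → ℕ → A
  | 0, k => if k = 0 then g else 0
  | j + 1, 0 => D (powCoeff j 0)
  | j + 1, k + 1 => D (powCoeff j (k + 1)) + (k + 1) * D f * powCoeff j k

theorem powCoeff_eq_zero_of_lt {j k : ℕ} (h : j < k) : powCoeff D f g j k = 0 := by
  induction j generalizing k with
  | zero => simp [powCoeff, h.ne']
  | succ j ih =>
    obtain ⟨k, rfl⟩ := Nat.exists_eq_add_one_of_ne_zero (by omega : k ≠ 0)
    rw [powCoeff, ih (by omega), ih (by omega), map_zero, mul_zero, add_zero]

theorem powCoeff_self (j : ℕ) : powCoeff D f g j j = j ! * D f ^ j * g := by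
  induction j with
  | zero => simp [powCoeff]
  | succ j ih =>
    rw [powCoeff, powCoeff_eq_zero_of_lt D f g j.lt_succ_self, map_zero, zero_add, ih,
      Nat.factorial_succ]
    push_cast
    ring

theorem map_choose_mul_pow_sub (m k : ℕ) :
    D ((m.choose k : A) * f ^ (m - k)) =
      (m.choose (k + 1) : A) * f ^ (m - (k + 1)) * ((k + 1) * D f) := by
  have hchoose : (m.choose (k + 1) : A) * (k + 1) = m.choose k * ((m - k : ℕ) : A) := by
    rw [← Nat.cast_succ, ← Nat.cast_mul, ← Nat.cast_mul, Nat.choose_succ_right_eq]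
  rw [D.leibniz, D.map_natCast, D.leibniz_pow, smul_zero, add_zero, Nat.sub_sub, smul_eq_mul,
    nsmul_eq_mul, smul_eq_mul]
  calc _ = (m.choose k * ((m - k : ℕ) : A)) * (f ^ (m - (k + 1)) * D f) := by ring
    _ = _ := by rw [← hchoose]; ring

theorem iterate_mul_pow (j m : ℕ) :
    D^[j] (g * f ^ m) =
      ∑ k ∈ range (j + 1), (m.choose k : A) * f ^ (m - k) * powCoeff D f g j k := by
  induction j with
  | zero => simp [powCoeff, mul_comm]
  | succ j ih =>
    set a : ℕ → A := fun k => (m.choose k : A) * f ^ (m - k)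
    have hextend : ∑ k ∈ range (j + 1), a k * D (powCoeff D f g j k) =
        ∑ k ∈ range (j + 2), a k * D (powCoeff D f g j k) := by
      rw [sum_range_succ _ (j + 1), powCoeff_eq_zero_of_lt D f g j.lt_succ_self, map_zero,
        mul_zero, add_zero]
    have hterm : ∀ k ∈ range (j + 1), D (a k * powCoeff D f g j k) =
        a k * D (powCoeff D f g j k) + a (k + 1) * ((k + 1) * D f * powCoeff D f g j k) := by
      intro k _
      rw [leibniz, smul_eq_mul, smul_eq_mul, map_choose_mul_pow_sub]
      ring
    rw [Function.iterate_succ_apply', ih, map_sum, sum_congr rfl hterm, sum_add_distrib,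
      hextend, sum_range_succ', sum_range_succ' _ (j + 1)]
    simp only [powCoeff, mul_add, sum_add_distrib]
    ring

end Expansion

variable {R A : Type*} [CommSemiring R] [CommRing A] [Algebra R A] (D : Derivation R A A) (f : A)

def iteratePowMatrix (n : ℕ) : Matrix (Fin n) (Fin n) A :=
  of fun m j => D^[j] (f ^ ((m : ℕ) + 1))

theorem iteratePowMatrix_eq_mul (n : ℕ) :
    iteratePowMatrix D f n =
      of (fun (m k : Fin n) => ((m : ℕ).choose k : A) * f ^ ((m : ℕ) - k)) *
        of (fun (k j : Fin n) => powCoeff D f f j k) := by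
  ext m j
  simp only [iteratePowMatrix, mul_apply, of_apply]
  rw [pow_succ', iterate_mul_pow,
    Fin.sum_univ_eq_sum_range (fun k => ((m : ℕ).choose k : A) * f ^ ((m : ℕ) - k) *
      powCoeff D f f j k)]
  refine sum_subset (range_subset_range.2 j.isLt) fun k _ hk => ?_
  rw [powCoeff_eq_zero_of_lt D f f (by simpa using hk), mul_zero]

theorem det_iteratePowMatrix (n : ℕ) :
    (iteratePowMatrix D f n).det =
      (∏ k ∈ range n, (k ! : A)) * D f ^ (n * (n - 1) / 2) * f ^ n := by
  have hlower :
      (of fun (m k : Fin n) => ((m : ℕ).choose k : A) * f ^ ((m : ℕ) - k)).IsLowerTriangular :=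
    fun m k h => by simp [Nat.choose_eq_zero_of_lt (show (m : ℕ) < k from h)]
  have hupper : (of fun (k j : Fin n) => powCoeff D f f j k).IsUpperTriangular :=
    fun k j h => powCoeff_eq_zero_of_lt D f f h
  rw [iteratePowMatrix_eq_mul, det_mul, det_of_isLowerTriangular _ hlower,
    det_of_isUpperTriangular hupper]
  simp only [of_apply, Nat.choose_self, Nat.sub_self, pow_zero, Nat.cast_one, mul_one,
    prod_const_one, one_mul, powCoeff_self, prod_mul_distrib, prod_pow_eq_pow_sum, prod_const,
    card_univ, Fintype.card_fin]
  rw [Fin.prod_univ_eq_prod_range (fun k => (k ! : A)), Fin.sum_univ_eq_sum_range (fun k => k),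
    sum_range_id]

end Derivation

theorem Matrix.det_smul_eq_zero_of_mulVec_eq_zero {n A : Type*} [Fintype n] [DecidableEq n]
    [CommRing A] {M : Matrix n n A} {v : n → A} (h : M *ᵥ v = 0) : M.det • v = 0 := by
  rw [← one_mulVec v, ← smul_mulVec, ← adjugate_mul, ← mulVec_mulVec, h, mulVec_zero]

theorem stmt18_general {A : Type*} [CommRing A] (D : Derivation ℤ A A)
    (d : ℕ) (c : ℕ → A) (f : A)
    (h : ∀ m : ℕ, 1 ≤ m → m ≤ d + 1 →
      ∑ i ∈ Finset.range (d + 1), c i * (⇑D)^[i] (f ^ m) = 0) :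
    ∀ i ≤ d,
      (∏ k ∈ Finset.range (d + 1), (Nat.factorial k : A)) *
        c i * (D f) ^ (d * (d + 1) / 2) * f ^ (d + 1) = 0 := by
  intro i hi
  have hsystem : D.iteratePowMatrix f (d + 1) *ᵥ (fun j => c j) = 0 := by
    funext m
    simp only [Derivation.iteratePowMatrix, mulVec, dotProduct, of_apply, Pi.zero_apply,
      mul_comm (D^[_] _)]
    rw [Fin.sum_univ_eq_sum_range (fun j => c j * D^[j] (f ^ ((m : ℕ) + 1)))]
    exact h _ m.val.succ_pos m.isLt
  have hi' := congrFun (det_smul_eq_zero_of_mulVec_eq_zero hsystem) ⟨i, by omega⟩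
  rw [Derivation.det_iteratePowMatrix, Nat.add_sub_cancel, mul_comm (d + 1)] at hi'
  simp only [Pi.smul_apply, smul_eq_mul, Pi.zero_apply] at hi'
  linear_combination hi'

/-- Let `A` be a commutative ring, `D` a derivation of `A`, `P(ξ) = ∑_{i=0}^d cᵢ ξ^i` a
nonzero polynomial over `A`, and `f ∈ A` with `P(D)(f^m) = 0` for all `1 ≤ m ≤ d+1`. Then
for each `0 ≤ i ≤ d`: `(∏_{k=1}^d k!) cᵢ (Df)^{d(d+1)/2} f^{d+1} = 0`. -/
theorem stmt18 {A : Type*} [CommRing A] (D : Derivation ℤ A A)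
    (d : ℕ) (c : ℕ → A) (hc : ∃ i ≤ d, c i ≠ 0) (f : A)
    (h : ∀ m : ℕ, 1 ≤ m → m ≤ d + 1 →
      ∑ i ∈ Finset.range (d + 1), c i * (⇑D)^[i] (f ^ m) = 0) :
    ∀ i ≤ d,
      (∏ k ∈ Finset.range (d + 1), (Nat.factorial k : A)) *
        c i * (D f) ^ (d * (d + 1) / 2) * f ^ (d + 1) = 0 :=
  stmt18_general D d c f h
end
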